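/- arXiv:1312.7792 — 5 statements merged into one kernel-verified Lean document; each statement's English description precedes it below -/
import Mathlib

section
/- Let ν be a positive Borel measure on the space of affine hyperplanes in ℝⁿ (n ≥ 2) such that ν of the set of hyperplanes through any single point of a convex domain Ω is zero, ν of the set of hyperplanes meeting any nondegenerate segment in Ω is positive, and ν of the set of hyperplanes meeting any compact subset of Ω is finite. Then d_ν(x,y) := ν({H : H ∩ [x,y] ≠ ∅}) defines a metric on Ω. -/
/-! A hyperplane `⟪·, v⟫ = c` meets `[a, b]` exactly when `c` lies between `⟪a, v⟫` and
`⟪b, v⟫`, because `⟪·, v⟫` maps segments onto segments. The triangle inequality for `d_ν` is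
then the triangle inclusion for real intervals, and positivity and finiteness of `ν` on
segments give definiteness and finite values. -/

open MeasureTheory Set

noncomputable section

/-- Euclidean space `ℝⁿ`. -/
abbrev Euc (n : ℕ) := EuclideanSpace ℝ (Fin n)

/-- The space of affine hyperplanes in `ℝⁿ`, encoded as pairs `(v, c)` with `‖v‖ = 1`,
representing the hyperplane `{x : ⟪x, v⟫ = c}`. -/
abbrev Hyp (n : ℕ) := {p : Euc n × ℝ // ‖p.1‖ = 1}

/-- The hyperplane determined by `H`, as a subset of `ℝⁿ`. -/
def hset {n : ℕ} (H : Hyp n) : Set (Euc n) := {x | (inner ℝ x H.1.1 : ℝ) = H.1.2}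

/-- `meets A = π A`: the set of hyperplanes intersecting `A`. -/
def meets {n : ℕ} (A : Set (Euc n)) : Set (Hyp n) := {H | (hset H ∩ A).Nonempty}

/-- The unit normal of `H` pointing out of the halfspace containing the basepoint `o`. -/
def nrm {n : ℕ} (o : Euc n) (H : Hyp n) : Euc n :=
  if (inner ℝ o H.1.1 : ℝ) < H.1.2 then H.1.1 else -H.1.1

/-- `fnu ν o x = ∫_{π[o,x]} n(H) dν(H)`. -/
def fnu {n : ℕ} (ν : Measure (Hyp n)) (o : Euc n) (x : Euc n) : Euc n :=
  ∫ H in meets (segment ℝ o x), nrm o H ∂ν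

/-- `sin α(v, H) = |⟪v, n(H)⟫| / |v|`, the sine of the angle between the line of `v`
and the hyperplane `H`. -/
def sinA {n : ℕ} (v : Euc n) (H : Hyp n) : ℝ := |(inner ℝ v H.1.1 : ℝ)| / ‖v‖

section Hyperplanes

variable {n : ℕ}

lemma mem_meets_segment_iff (H : Hyp n) (a b : Euc n) :
    H ∈ meets (segment ℝ a b) ↔ H.1.2 ∈ uIcc (inner ℝ a H.1.1) (inner ℝ b H.1.1) := by
  let L : Euc n →ᵃ[ℝ] ℝ := ((innerSL ℝ).flip H.1.1).toLinearMap.toAffineMap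
  have himage : L '' segment ℝ a b = uIcc (inner ℝ a H.1.1) (inner ℝ b H.1.1) := by
    rw [image_segment, segment_eq_uIcc]
    rfl
  rw [← himage]
  exact ⟨fun ⟨p, hpH, hp⟩ => ⟨p, hp, hpH⟩, fun ⟨p, hp, hpH⟩ => ⟨p, hpH, hp⟩⟩

lemma meets_segment_subset_union (x y z : Euc n) :
    meets (segment ℝ x z) ⊆ meets (segment ℝ x y) ∪ meets (segment ℝ y z) := by
  intro H hH
  simpa only [mem_union, mem_meets_segment_iff] using
    uIcc_subset_uIcc_union_uIcc ((mem_meets_segment_iff H x z).1 hH)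

lemma measure_meets_segment_le_add (ν : Measure (Hyp n)) (x y z : Euc n) :
    ν (meets (segment ℝ x z)) ≤ ν (meets (segment ℝ x y)) + ν (meets (segment ℝ y z)) :=
  (measure_mono (meets_segment_subset_union x y z)).trans (measure_union_le _ _)

end Hyperplanes

theorem stmt0_general (n : ℕ) (Ω : Set (Euc n))
    (hΩc : Convex ℝ Ω) (ν : Measure (Hyp n))
    (hpt : ∀ p ∈ Ω, ν (meets {p}) = 0)
    (hseg : ∀ x ∈ Ω, ∀ y ∈ Ω, x ≠ y → 0 < ν (meets (segment ℝ x y)))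
    (hcpt : ∀ K ⊆ Ω, IsCompact K → ν (meets K) < ⊤)
    (d : Euc n → Euc n → ℝ)
    (hd : ∀ x y, d x y = (ν (meets (segment ℝ x y))).toReal) :
    (∀ x ∈ Ω, ∀ y ∈ Ω, (d x y = 0 ↔ x = y)) ∧
    (∀ x ∈ Ω, ∀ y ∈ Ω, d x y = d y x) ∧
    (∀ x ∈ Ω, ∀ y ∈ Ω, ∀ z ∈ Ω, d x z ≤ d x y + d y z) := by
  have hfin : ∀ x ∈ Ω, ∀ y ∈ Ω, ν (meets (segment ℝ x y)) ≠ ⊤ := fun x hx y hy => by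
    refine (hcpt _ (hΩc.segment_subset hx hy) ?_).ne
    rw [← convexHull_pair]
    exact (toFinite {x, y}).isCompact_convexHull ℝ
  refine ⟨fun x hx y hy => ⟨fun hxy => ?_, ?_⟩, fun x _ y _ => ?_, fun x hx y hy z hz => ?_⟩
  · by_contra hne
    rw [hd, ENNReal.toReal_eq_zero_iff] at hxy
    exact hxy.elim (hseg x hx y hy hne).ne' (hfin x hx y hy)
  · rintro rfl
    rw [hd, segment_same, hpt x hx, ENNReal.toReal_zero]
  · rw [hd, hd, segment_symm]
  · rw [hd, hd, hd, ← ENNReal.toReal_add (hfin x hx y hy) (hfin y hy z hz)]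
    exact ENNReal.toReal_mono (ENNReal.add_ne_top.2 ⟨hfin x hx y hy, hfin y hy z hz⟩)
      (measure_meets_segment_le_add ν x y z)

/-- under the standing assumptions on `ν`, `d_ν(x,y) = ν(π[x,y])` is a metric
on the convex domain `Ω`. -/
theorem stmt0 (n : ℕ) (hn : 2 ≤ n) (Ω : Set (Euc n)) (hΩo : IsOpen Ω) (hΩne : Ω.Nonempty)
    (hΩc : Convex ℝ Ω) (ν : Measure (Hyp n))
    (hpt : ∀ p ∈ Ω, ν (meets {p}) = 0)
    (hseg : ∀ x ∈ Ω, ∀ y ∈ Ω, x ≠ y → 0 < ν (meets (segment ℝ x y)))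
    (hcpt : ∀ K ⊆ Ω, IsCompact K → ν (meets K) < ⊤)
    (d : Euc n → Euc n → ℝ)
    (hd : ∀ x y, d x y = (ν (meets (segment ℝ x y))).toReal) :
    (∀ x ∈ Ω, ∀ y ∈ Ω, (d x y = 0 ↔ x = y)) ∧
    (∀ x ∈ Ω, ∀ y ∈ Ω, d x y = d y x) ∧
    (∀ x ∈ Ω, ∀ y ∈ Ω, ∀ z ∈ Ω, d x z ≤ d x y + d y z) :=
  stmt0_general n Ω hΩc ν hpt hseg hcpt d hd
end
end

section
/- With f_ν(x) = ∫_{π[o,x]} n(H) dν(H), for all x, y ∈ Ω: ⟨f_ν(x) − f_ν(y), x − y⟩ = |x − y| ∫_{π[x,y]} sin α(x−y, H) dν(H), where α(v,H) ∈ [0, π/2] is the angle between the line spanned by v and the hyperplane H. -/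
open MeasureTheory Set

noncomputable section

/-!
For `H = {⟪·, v⟫ = c}` put `offset H x = ⟪x, v⟫ - c`; then `H` meets `[x, y]` iff
`offset H x * offset H y ≤ 0`. Off the `ν`-null set of hyperplanes through `o`, `x` or `y`, a
hyperplane meets exactly one of `[o, x]`, `[o, y]` iff it meets `[x, y]`, and `n(H)` then points
from the side of `o` towards the endpoint that `H` separates from `o`. So in
`⟪f(x) - f(y), x - y⟫ = ∫_{π[o,x]} ⟪n, x - y⟫ dν - ∫_{π[o,y]} ⟪n, x - y⟫ dν` the integrands cancel
on `π[o, x] ∩ π[o, y]`, and what remains is `|⟪v, x - y⟫| = |x - y| sin α(x - y, H)` on `π[x, y]`.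
-/

section

variable {n : ℕ}

def offset (H : Hyp n) : Euc n →ᵃ[ℝ] ℝ :=
  (innerₛₗ ℝ H.1.1).toAffineMap - AffineMap.const ℝ (Euc n) H.1.2

lemma offset_apply (H : Hyp n) (x : Euc n) : offset H x = inner ℝ x H.1.1 - H.1.2 := by
  simp [offset, real_inner_comm]

lemma inner_sub_eq_offset_sub (H : Hyp n) (x y : Euc n) :
    inner ℝ (x - y) H.1.1 = offset H x - offset H y := by
  simp only [offset_apply, inner_sub_left]; ring

lemma continuous_offset_apply (x : Euc n) : Continuous fun H : Hyp n => offset H x := by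
  simp only [offset_apply]; fun_prop

lemma mem_meets_iff_zero_mem_image (H : Hyp n) (A : Set (Euc n)) :
    H ∈ meets A ↔ 0 ∈ offset H '' A := by
  simp only [meets, hset, Set.Nonempty, mem_inter_iff, mem_ofPred_eq, mem_image,
    offset_apply, sub_eq_zero]
  tauto

lemma mem_meets_singleton_iff (H : Hyp n) (p : Euc n) : H ∈ meets {p} ↔ offset H p = 0 := by
  rw [mem_meets_iff_zero_mem_image, image_singleton, mem_singleton_iff, eq_comm]

lemma mem_meets_segment_iff_s4 (H : Hyp n) (x y : Euc n) :
    H ∈ meets (segment ℝ x y) ↔ offset H x * offset H y ≤ 0 := by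
  rw [mem_meets_iff_zero_mem_image, image_segment, segment_eq_uIcc, mem_uIcc, mul_nonpos_iff]
  tauto

lemma measurableSet_meets_segment (x y : Euc n) : MeasurableSet (meets (segment ℝ x y)) := by
  rw [show meets (segment ℝ x y) = {H | offset H x * offset H y ≤ 0} from
    Set.ext fun H => mem_meets_segment_iff_s4 H x y]
  exact measurableSet_le
    ((continuous_offset_apply x).mul (continuous_offset_apply y)).measurable measurable_const

lemma ae_offset_ne_zero {ν : Measure (Hyp n)} {p : Euc n} (hp : ν (meets {p}) = 0) :
    ∀ᵐ H ∂ν, offset H p ≠ 0 :=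
  (measure_eq_zero_iff_ae_notMem.mp hp).mono fun H h => (mem_meets_singleton_iff H p).not.mp h

lemma nrm_eq_ite (o : Euc n) (H : Hyp n) :
    nrm o H = if offset H o < 0 then H.1.1 else -H.1.1 := by
  simp only [nrm, offset_apply, sub_neg]

lemma norm_nrm (o : Euc n) (H : Hyp n) : ‖nrm o H‖ = 1 := by
  unfold nrm; split_ifs <;> simp [H.2]

lemma measurable_nrm (o : Euc n) : Measurable (nrm o) := by
  simp only [funext (nrm_eq_ite o)]
  refine Measurable.ite ?_ (by fun_prop) (by fun_prop)
  exact measurableSet_lt (continuous_offset_apply o).measurable measurable_const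

lemma integrableOn_nrm {ν : Measure (Hyp n)} {s : Set (Hyp n)} (hs : ν s ≠ ⊤) (o : Euc n) :
    IntegrableOn (nrm o) s ν :=
  Measure.integrableOn_of_bounded hs (measurable_nrm o).aestronglyMeasurable
    (ae_of_all _ fun H => (norm_nrm o H).le)

lemma inner_nrm_eq_ite (o x y : Euc n) (H : Hyp n) : inner ℝ (x - y) (nrm o H) =
    if offset H o < 0 then offset H x - offset H y else offset H y - offset H x := by
  rw [nrm_eq_ite]
  split_ifs
  · exact inner_sub_eq_offset_sub H x y
  · rw [inner_neg_right, inner_sub_eq_offset_sub, neg_sub]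

lemma ite_mul_nonpos_sub_ite_mul_nonpos {a b c : ℝ} (ha : a ≠ 0) (hb : b ≠ 0) (hc : c ≠ 0) :
    (if a * b ≤ 0 then (if a < 0 then b - c else c - b) else 0)
      - (if a * c ≤ 0 then (if a < 0 then b - c else c - b) else 0)
    = (if b * c ≤ 0 then |b - c| else 0) := by
  rcases ha.lt_or_gt with ha | ha <;> rcases hb.lt_or_gt with hb | hb <;>
    rcases hc.lt_or_gt with hc | hc <;>
    simp [mul_nonpos_iff, ha, ha.le, hb.le, hc.le, ha.not_gt, ha.not_ge, hb.not_ge, hc.not_ge] <;>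
    cases abs_cases (b - c) <;> linarith

lemma indicator_sub_indicator_eq_indicator {o x y : Euc n} {H : Hyp n} (ho : offset H o ≠ 0)
    (hx : offset H x ≠ 0) (hy : offset H y ≠ 0) :
    (meets (segment ℝ o x)).indicator (fun H => inner ℝ (x - y) (nrm o H)) H
      - (meets (segment ℝ o y)).indicator (fun H => inner ℝ (x - y) (nrm o H)) H
    = (meets (segment ℝ x y)).indicator (fun H => |inner ℝ (x - y) H.1.1|) H := by
  simp only [Set.indicator, mem_meets_segment_iff_s4, inner_nrm_eq_ite, inner_sub_eq_offset_sub]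
  exact ite_mul_nonpos_sub_ite_mul_nonpos ho hx hy

theorem inner_fnu_sub_fnu {ν : Measure (Hyp n)} {o x y : Euc n} (hνo : ν (meets {o}) = 0)
    (hνx : ν (meets {x}) = 0) (hνy : ν (meets {y}) = 0)
    (hox : ν (meets (segment ℝ o x)) ≠ ⊤) (hoy : ν (meets (segment ℝ o y)) ≠ ⊤) :
    inner ℝ (fnu ν o x - fnu ν o y) (x - y) =
      ∫ H in meets (segment ℝ x y), |inner ℝ (x - y) H.1.1| ∂ν := by
  set φ := fun H => inner ℝ (x - y) (nrm o H)
  have hφ : ∀ {p}, ν (meets (segment ℝ o p)) ≠ ⊤ →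
      Integrable ((meets (segment ℝ o p)).indicator φ) ν := fun h =>
    (integrable_indicator_iff (measurableSet_meets_segment o _)).mpr
      ((integrableOn_nrm h o).const_inner (x - y))
  calc inner ℝ (fnu ν o x - fnu ν o y) (x - y)
      = (∫ H in meets (segment ℝ o x), φ H ∂ν) - ∫ H in meets (segment ℝ o y), φ H ∂ν := by
        rw [real_inner_comm, inner_sub_right, fnu, fnu,
          ← integral_inner (integrableOn_nrm hox o), ← integral_inner (integrableOn_nrm hoy o)]
    _ = ∫ H, ((meets (segment ℝ o x)).indicator φ H
          - (meets (segment ℝ o y)).indicator φ H) ∂ν := by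
        rw [integral_sub (hφ hox) (hφ hoy), integral_indicator (measurableSet_meets_segment o x),
          integral_indicator (measurableSet_meets_segment o y)]
    _ = ∫ H, (meets (segment ℝ x y)).indicator (fun H => |inner ℝ (x - y) H.1.1|) H ∂ν := by
        refine integral_congr_ae ?_
        filter_upwards [ae_offset_ne_zero hνo, ae_offset_ne_zero hνx, ae_offset_ne_zero hνy]
          with H ho hx hy
        exact indicator_sub_indicator_eq_indicator ho hx hy
    _ = _ := integral_indicator (measurableSet_meets_segment x y)

lemma norm_mul_sinA (v : Euc n) (H : Hyp n) : ‖v‖ * sinA v H = |inner ℝ v H.1.1| := by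
  rcases eq_or_ne v 0 with rfl | hv
  · simp
  · exact mul_div_cancel₀ _ (norm_ne_zero_iff.mpr hv)

lemma norm_mul_integral_sinA (ν : Measure (Hyp n)) (s : Set (Hyp n)) (v : Euc n) :
    ‖v‖ * ∫ H in s, sinA v H ∂ν = ∫ H in s, |inner ℝ v H.1.1| ∂ν := by
  simp only [← integral_const_mul, norm_mul_sinA]

end

lemma isCompact_segment {E : Type*} [AddCommGroup E] [Module ℝ E] [TopologicalSpace E]
    [IsTopologicalAddGroup E] [ContinuousSMul ℝ E] (x y : E) : IsCompact (segment ℝ x y) := by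
  rw [← convexHull_pair]
  exact (Set.toFinite {x, y}).isCompact_convexHull ℝ

theorem stmt4_general (n : ℕ) (Ω : Set (Euc n))
    (hΩc : Convex ℝ Ω) (ν : Measure (Hyp n))
    (hpt : ∀ p ∈ Ω, ν (meets {p}) = 0)
    (hcpt : ∀ K ⊆ Ω, IsCompact K → ν (meets K) < ⊤)
    (o : Euc n) (ho : o ∈ Ω) :
    ∀ x ∈ Ω, ∀ y ∈ Ω,
      (inner ℝ (fnu ν o x - fnu ν o y) (x - y) : ℝ) =
        ‖x - y‖ * ∫ H in meets (segment ℝ x y), sinA (x - y) H ∂ν := by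
  intro x hx y hy
  have hfin : ∀ p ∈ Ω, ν (meets (segment ℝ o p)) ≠ ⊤ := fun p hp =>
    (hcpt _ (hΩc.segment_subset ho hp) (isCompact_segment o p)).ne
  rw [norm_mul_integral_sinA]
  exact inner_fnu_sub_fnu (hpt o ho) (hpt x hx) (hpt y hy) (hfin x hx) (hfin y hy)

/-- `⟨f_ν(x) − f_ν(y), x − y⟩ = |x − y| ∫_{π[x,y]} sin α(x−y, H) dν(H)`. -/
theorem stmt4 (n : ℕ) (hn : 2 ≤ n) (Ω : Set (Euc n)) (hΩo : IsOpen Ω) (hΩne : Ω.Nonempty)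
    (hΩc : Convex ℝ Ω) (ν : Measure (Hyp n))
    (hpt : ∀ p ∈ Ω, ν (meets {p}) = 0)
    (hseg : ∀ x ∈ Ω, ∀ y ∈ Ω, x ≠ y → 0 < ν (meets (segment ℝ x y)))
    (hcpt : ∀ K ⊆ Ω, IsCompact K → ν (meets K) < ⊤)
    (o : Euc n) (ho : o ∈ Ω) :
    ∀ x ∈ Ω, ∀ y ∈ Ω,
      (inner ℝ (fnu ν o x - fnu ν o y) (x - y) : ℝ) =
        ‖x - y‖ * ∫ H in meets (segment ℝ x y), sinA (x - y) H ∂ν :=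
  stmt4_general n Ω hΩc ν hpt hcpt o ho
end
end

section
/- Let Q ⊂ ℝⁿ be a cube with edge length a, and let H be a hyperplane intersecting Q but containing no vertex of Q. Then there exist two vertices x, y of Q separated by H such that the angle α(x−y, H) satisfies sin α(x−y, H) ≥ 1/√n. -/
/-!
Write `H = {⟪·, v⟫ = c}` with `‖v‖ = 1`. The vertex `x` taking the upper end `bᵢ + a` exactly in the
coordinates where `vᵢ ≥ 0` maximises `⟪·, v⟫` on the cube and the opposite vertex `y` minimises it,
so a point of `H ∩ Q` forces `⟪y, v⟫ ≤ c ≤ ⟪x, v⟫`, strictly since no vertex lies on `H`.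
The diagonal `x - y = a • (±1, …, ±1)` has length `|a| √n`, while
`⟪x - y, v⟫ = a ∑ |vᵢ|` and `∑ |vᵢ| ≥ ‖v‖ = 1`.
-/

open MeasureTheory Set

noncomputable section

/-- The axis-parallel closed cube with lower corner `b` and edge length `a`. -/
def cube {n : ℕ} (b : Euc n) (a : ℝ) : Set (Euc n) :=
  {z | ∀ i, z i ∈ Icc (b i) (b i + a)}

/-- `x` is a vertex of the cube `cube b a`. -/
def IsVertex {n : ℕ} (b : Euc n) (a : ℝ) (x : Euc n) : Prop :=
  ∀ i, x i = b i ∨ x i = b i + a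

/-- The hyperplane `H` (strictly) separates the points `x` and `y`. -/
def Separates {n : ℕ} (H : Hyp n) (x y : Euc n) : Prop :=
  ((inner ℝ x H.1.1 : ℝ) - H.1.2) * ((inner ℝ y H.1.1 : ℝ) - H.1.2) < 0

open scoped RealInnerProductSpace

theorem EuclideanSpace.norm_le_sum_abs {ι : Type*} [Fintype ι] (u : EuclideanSpace ℝ ι) :
    ‖u‖ ≤ ∑ i, |u i| := by
  let e := EuclideanSpace.basisFun ι ℝ
  calc ‖u‖ = ‖∑ i, e.repr u i • e i‖ := by rw [e.sum_repr]
    _ ≤ ∑ i, ‖e.repr u i • e i‖ := norm_sum_le _ _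
    _ = ∑ i, |u i| := by simp [norm_smul, e]

theorem EuclideanSpace.real_inner_eq_sum_mul {ι : Type*} [Fintype ι] (u v : EuclideanSpace ℝ ι) :
    ⟪u, v⟫ = ∑ i, u i * v i := by
  simp [PiLp.inner_apply, mul_comm]

open EuclideanSpace

section

variable {n : ℕ}

theorem sinA_smul {v : Euc n} {c : ℝ} (hc : c ≠ 0) (H : Hyp n) : sinA (c • v) H = sinA v H := by
  rw [sinA, sinA, inner_smul_left, norm_smul, Real.norm_eq_abs, conj_trivial, abs_mul,
    mul_div_mul_left _ _ (abs_ne_zero.2 hc)]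

def signVec (v : Euc n) : Euc n := WithLp.toLp 2 fun i => if 0 ≤ v i then 1 else -1

theorem inner_signVec (v : Euc n) : ⟪signVec v, v⟫ = ∑ i, |v i| := by
  rw [real_inner_eq_sum_mul]
  refine Finset.sum_congr rfl fun i _ => ?_
  by_cases h : 0 ≤ v i
  · simp [signVec, h, abs_of_nonneg h]
  · simp [signVec, h, abs_of_neg (not_le.1 h)]

theorem norm_signVec (v : Euc n) : ‖signVec v‖ = √n := by
  rw [EuclideanSpace.norm_eq]
  congr 1
  simp [signVec, apply_ite]

theorem one_div_sqrt_le_sinA_signVec (H : Hyp n) : 1 / √n ≤ sinA (signVec H.1.1) H := by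
  rw [sinA, inner_signVec, norm_signVec, abs_of_nonneg (by positivity)]
  exact div_le_div_of_nonneg_right (H.2.ge.trans (norm_le_sum_abs _)) (Real.sqrt_nonneg _)

def vertexToward (b : Euc n) (a : ℝ) (v : Euc n) : Euc n :=
  WithLp.toLp 2 fun i => if 0 ≤ v i then b i + a else b i

theorem isVertex_vertexToward (b : Euc n) (a : ℝ) (v : Euc n) :
    IsVertex b a (vertexToward b a v) := fun i => by
  by_cases h : 0 ≤ v i <;> simp [vertexToward, h]

def vertexAway (b : Euc n) (a : ℝ) (v : Euc n) : Euc n :=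
  WithLp.toLp 2 fun i => if 0 ≤ v i then b i else b i + a

theorem isVertex_vertexAway (b : Euc n) (a : ℝ) (v : Euc n) :
    IsVertex b a (vertexAway b a v) := fun i => by
  by_cases h : 0 ≤ v i <;> simp [vertexAway, h]

theorem vertexToward_sub_vertexAway (b : Euc n) (a : ℝ) (v : Euc n) :
    vertexToward b a v - vertexAway b a v = a • signVec v := by
  ext i
  by_cases h : 0 ≤ v i <;> simp [vertexToward, vertexAway, signVec, h]

theorem inner_le_inner_vertexToward {b z : Euc n} {a : ℝ} (hz : z ∈ cube b a) (v : Euc n) :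
    ⟪z, v⟫ ≤ ⟪vertexToward b a v, v⟫ := by
  rw [real_inner_eq_sum_mul, real_inner_eq_sum_mul]
  refine Finset.sum_le_sum fun i _ => ?_
  by_cases h : 0 ≤ v i
  · simpa [vertexToward, h] using mul_le_mul_of_nonneg_right (hz i).2 h
  · simpa [vertexToward, h] using mul_le_mul_of_nonpos_right (hz i).1 (le_of_not_ge h)

theorem inner_vertexAway_le_inner {b z : Euc n} {a : ℝ} (hz : z ∈ cube b a) (v : Euc n) :
    ⟪vertexAway b a v, v⟫ ≤ ⟪z, v⟫ := by
  rw [real_inner_eq_sum_mul, real_inner_eq_sum_mul]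
  refine Finset.sum_le_sum fun i _ => ?_
  by_cases h : 0 ≤ v i
  · simpa [vertexAway, h] using mul_le_mul_of_nonneg_right (hz i).1 h
  · simpa [vertexAway, h] using mul_le_mul_of_nonpos_right (hz i).2 (le_of_not_ge h)

end

theorem stmt13_general (n : ℕ) (b : Euc n) (a : ℝ) (H : Hyp n)
    (hmeet : (hset H ∩ cube b a).Nonempty)
    (hvert : ∀ x, IsVertex b a x → x ∉ hset H) :
    ∃ x y, IsVertex b a x ∧ IsVertex b a y ∧ Separates H x y ∧
      1 / Real.sqrt n ≤ sinA (x - y) H := by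
  obtain ⟨z, hzH, hzC⟩ := hmeet
  set x := vertexToward b a H.1.1
  set y := vertexAway b a H.1.1
  have hx : H.1.2 < ⟪x, H.1.1⟫ := lt_of_le_of_ne (hzH ▸ inner_le_inner_vertexToward hzC _)
    (Ne.symm (hvert x (isVertex_vertexToward b a _)))
  have hy : ⟪y, H.1.1⟫ < H.1.2 := lt_of_le_of_ne (hzH ▸ inner_vertexAway_le_inner hzC _)
    (hvert y (isVertex_vertexAway b a _))
  have hsep : Separates H x y := mul_neg_of_pos_of_neg (sub_pos.2 hx) (sub_neg.2 hy)
  have ha : a ≠ 0 := by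
    rintro rfl
    have hxy : x = y := sub_eq_zero.1 (by simpa using vertexToward_sub_vertexAway b 0 H.1.1)
    exact (mul_self_nonneg _).not_gt (hxy ▸ hsep)
  refine ⟨x, y, isVertex_vertexToward b a _, isVertex_vertexAway b a _, hsep, ?_⟩
  rw [vertexToward_sub_vertexAway, sinA_smul ha]
  exact one_div_sqrt_le_sinA_signVec H

/-- a hyperplane meeting a cube but containing none of its vertices separates
two vertices `x, y` with `sin α(x−y, H) ≥ 1/√n`. -/
theorem stmt13 (n : ℕ) (hn : 2 ≤ n) (b : Euc n) (a : ℝ) (ha : 0 < a) (H : Hyp n)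
    (hmeet : (hset H ∩ cube b a).Nonempty)
    (hvert : ∀ x, IsVertex b a x → x ∉ hset H) :
    ∃ x y, IsVertex b a x ∧ IsVertex b a y ∧ Separates H x y ∧
      1 / Real.sqrt n ≤ sinA (x - y) H :=
  stmt13_general n b a H hmeet hvert
end
end

section
/- Every ν-measurable set of hyperplanes meeting a cube Q ⊂ Ω can, up to a ν-null set, be covered by the sets S_{x,y} over pairs of vertices {x,y} of Q, where S_{x,y} is the set of hyperplanes separating x from y with sin α(x−y,H) ≥ 1/√n; consequently there exists a pair of vertices {x,y} with ν(S_{x,y}) ≥ 4^{-n} ν(πQ). -/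
open MeasureTheory Set

noncomputable section

/-- The set `S_{x,y}` of hyperplanes separating `x` from `y` and making angle at least
`arcsin (1/√n)` with the line through `x` and `y`. -/
def Sset {n : ℕ} (x y : Euc n) : Set (Hyp n) :=
  {H | Separates H x y ∧ 1 / Real.sqrt n ≤ sinA (x - y) H}

/-! For a hyperplane `H = {⟪·, v⟫ = c}` meeting the cube, the vertices `x` and `y`
minimising and maximising `⟪·, v⟫` over the cube satisfy `⟪x, v⟫ ≤ c ≤ ⟪y, v⟫`, strictly unless
`H` passes through a vertex, which happens only on a `ν`-null set. The diagonal `x - y` has all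
coordinates `±a`, so `|⟪x - y, v⟫| = a ∑ |vᵢ| ≥ a ∑ vᵢ² = a` while `‖x - y‖ = a √n`, giving
`sin α(x - y, H) ≥ 1/√n`. Since there are `4ⁿ` ordered pairs of vertices, one of them carries at
least a `4⁻ⁿ` share of `ν(πQ)`. -/

section Vertices

variable {n : ℕ} (b : Euc n) (a : ℝ)

def vert (s : Fin n → Bool) : Euc n :=
  WithLp.toLp 2 fun i => if s i then b i + a else b i

lemma vert_isVertex (s : Fin n → Bool) : IsVertex b a (vert b a s) := by
  intro i
  cases h : s i <;> simp [vert, h]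

lemma setOf_isVertex_eq_range_vert : {x | IsVertex b a x} = range (vert b a) := by
  refine Subset.antisymm (fun x hx => ?_) (range_subset_iff.2 (vert_isVertex b a))
  classical
  refine ⟨fun i => decide (x i = b i + a), PiLp.ext fun i => ?_⟩
  by_cases h : x i = b i + a
  · simp [vert, h]
  · simpa [vert, h] using ((hx i).resolve_right h).symm

variable {b a}

lemma vert_injective (ha : a ≠ 0) : Function.Injective (vert b a) := by
  intro s t hst
  funext i
  have hi := congrArg (fun x : Euc n => x i) hst
  cases hs : s i <;> cases ht : t i <;> simp [vert, hs, ht, ha] at hi ⊢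

lemma IsVertex.mem_cube {x : Euc n} (hx : IsVertex b a x) (ha : 0 ≤ a) : x ∈ cube b a := by
  intro i
  rcases hx i with h | h <;> rw [h] <;> constructor <;> linarith

variable (b a)

/-- The vertex of `cube b a` minimising `⟪·, v⟫`. -/
def lowVertex (v : Euc n) : Euc n := vert b a fun i => decide (v i < 0)

/-- The vertex of `cube b a` maximising `⟪·, v⟫`. -/
def highVertex (v : Euc n) : Euc n := vert b a fun i => decide (0 ≤ v i)

variable {b a}

lemma inner_lowVertex_le {v z : Euc n} (hz : z ∈ cube b a) :
    inner ℝ (lowVertex b a v) v ≤ inner ℝ z v := by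
  simp only [PiLp.inner_apply, RCLike.inner_apply, conj_trivial]
  refine Finset.sum_le_sum fun i _ => ?_
  by_cases h : v i < 0
  · simpa [lowVertex, vert, h] using mul_le_mul_of_nonpos_left (hz i).2 h.le
  · simpa [lowVertex, vert, h] using mul_le_mul_of_nonneg_left (hz i).1 (not_lt.1 h)

lemma inner_le_inner_highVertex {v z : Euc n} (hz : z ∈ cube b a) :
    inner ℝ z v ≤ inner ℝ (highVertex b a v) v := by
  simp only [PiLp.inner_apply, RCLike.inner_apply, conj_trivial]
  refine Finset.sum_le_sum fun i _ => ?_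
  by_cases h : 0 ≤ v i
  · simpa [highVertex, vert, h] using mul_le_mul_of_nonneg_left (hz i).2 h
  · simpa [highVertex, vert, h] using mul_le_mul_of_nonpos_left (hz i).1 (not_le.1 h).le

lemma lowVertex_sub_highVertex_apply (v : Euc n) (i : Fin n) :
    (lowVertex b a v - highVertex b a v) i = if 0 ≤ v i then -a else a := by
  by_cases h : 0 ≤ v i <;> simp [lowVertex, highVertex, vert, h, not_lt.2, lt_of_not_ge]

lemma inner_lowVertex_sub_highVertex (v : Euc n) :
    inner ℝ (lowVertex b a v - highVertex b a v) v = -(a * ∑ i, |v i|) := by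
  simp only [PiLp.inner_apply, RCLike.inner_apply, conj_trivial, lowVertex_sub_highVertex_apply,
    Finset.mul_sum, ← Finset.sum_neg_distrib]
  refine Finset.sum_congr rfl fun i _ => ?_
  by_cases h : 0 ≤ v i
  · simp [h, abs_of_nonneg h, mul_comm]
  · simp [h, abs_of_neg (not_le.1 h), mul_comm]

lemma norm_lowVertex_sub_highVertex (ha : 0 ≤ a) (v : Euc n) :
    ‖lowVertex b a v - highVertex b a v‖ = a * √n := by
  have hsq : ∀ i, ‖(lowVertex b a v - highVertex b a v) i‖ ^ 2 = a ^ 2 := fun i => by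
    rw [lowVertex_sub_highVertex_apply]
    split_ifs <;> simp
  rw [EuclideanSpace.norm_eq, Finset.sum_congr rfl fun i _ => hsq i, Finset.sum_const,
    Finset.card_univ, Fintype.card_fin, nsmul_eq_mul, Real.sqrt_mul n.cast_nonneg, Real.sqrt_sq ha,
    mul_comm]

end Vertices

lemma one_le_sum_abs_of_norm_eq_one {n : ℕ} {v : Euc n} (hv : ‖v‖ = 1) : 1 ≤ ∑ i, |v i| := by
  have hsq : ∑ i, |v i| ^ 2 = 1 := by
    simpa [hv] using (EuclideanSpace.norm_sq_eq v).symm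
  refine hsq ▸ Finset.sum_le_sum fun i _ => ?_
  have hi : |v i| ≤ 1 := hv ▸ PiLp.norm_apply_le v i
  nlinarith [abs_nonneg (v i)]

lemma inv_sqrt_le_sinA_lowVertex_sub_highVertex {n : ℕ} {b : Euc n} {a : ℝ} (ha : 0 < a)
    (H : Hyp n) : 1 / √n ≤ sinA (lowVertex b a H.1.1 - highVertex b a H.1.1) H := by
  rw [sinA, inner_lowVertex_sub_highVertex, norm_lowVertex_sub_highVertex ha.le, abs_neg,
    abs_of_nonneg (by positivity), mul_div_mul_left _ _ ha.ne']
  exact div_le_div_of_nonneg_right (one_le_sum_abs_of_norm_eq_one H.2) (Real.sqrt_nonneg _)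

lemma mem_meets_singleton {n : ℕ} {H : Hyp n} {p : Euc n} :
    H ∈ meets {p} ↔ inner ℝ p H.1.1 = H.1.2 := by
  simp [meets, hset]

lemma mem_Sset_of_mem_meets_cube {n : ℕ} {b : Euc n} {a : ℝ} (ha : 0 < a) {H : Hyp n}
    (hH : H ∈ meets (cube b a)) (hvert : ∀ p, IsVertex b a p → H ∉ meets {p}) :
    H ∈ Sset (lowVertex b a H.1.1) (highVertex b a H.1.1) := by
  obtain ⟨z, hzH, hz⟩ := hH
  have hlow : inner ℝ (lowVertex b a H.1.1) H.1.1 < H.1.2 :=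
    (hzH ▸ inner_lowVertex_le hz).lt_of_ne fun h =>
      hvert _ (vert_isVertex b a _) (mem_meets_singleton.2 h)
  have hhigh : H.1.2 < inner ℝ (highVertex b a H.1.1) H.1.1 :=
    (hzH ▸ inner_le_inner_highVertex hz).lt_of_ne fun h =>
      hvert _ (vert_isVertex b a _) (mem_meets_singleton.2 h.symm)
  exact ⟨mul_neg_of_neg_of_pos (sub_neg.2 hlow) (sub_pos.2 hhigh),
    inv_sqrt_le_sinA_lowVertex_sub_highVertex ha H⟩

lemma ne_of_mem_Sset {n : ℕ} {H : Hyp n} {x y : Euc n} (hH : H ∈ Sset x y) : x ≠ y := by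
  rintro rfl
  exact (mul_self_nonneg _).not_gt hH.1

lemma meets_cube_diff_subset_iUnion_meets_vertex {n : ℕ} {b : Euc n} {a : ℝ} (ha : 0 < a) :
    meets (cube b a) \ ⋃ x ∈ {v | IsVertex b a v}, ⋃ y ∈ {v | IsVertex b a v}, Sset x y ⊆
      ⋃ p ∈ {v | IsVertex b a v}, meets {p} := by
  rintro H ⟨hH, hS⟩
  by_contra hp
  simp only [mem_iUnion, not_exists] at hp
  exact hS (mem_biUnion (vert_isVertex b a _) (mem_biUnion (vert_isVertex b a _)
    (mem_Sset_of_mem_meets_cube ha hH hp)))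

lemma MeasureTheory.exists_measure_iUnion_le_card_mul {α ι : Type*} [MeasurableSpace α]
    [Fintype ι] [Nonempty ι] (μ : Measure α) (s : ι → Set α) :
    ∃ i, μ (⋃ j, s j) ≤ Fintype.card ι * μ (s i) := by
  obtain ⟨i, -, hi⟩ := Finset.exists_max_image Finset.univ (fun j => μ (s j)) Finset.univ_nonempty
  refine ⟨i, (measure_iUnion_fintype_le μ s).trans ?_⟩
  simpa using Finset.sum_le_card_nsmul Finset.univ (fun j => μ (s j)) (μ (s i))
    fun j _ => hi j (Finset.mem_univ j)

theorem stmt15_general (n : ℕ) (hn : 2 ≤ n) (Ω : Set (Euc n)) (ν : Measure (Hyp n))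
    (hpt : ∀ p ∈ Ω, ν (meets {p}) = 0)
    (b : Euc n) (a : ℝ) (ha : 0 < a) (hQ : cube b a ⊆ Ω) :
    ν (meets (cube b a) \
        ⋃ x ∈ {v | IsVertex b a v}, ⋃ y ∈ {v | IsVertex b a v}, Sset x y) = 0 ∧
    ∃ x y, IsVertex b a x ∧ IsVertex b a y ∧ x ≠ y ∧
      ν (meets (cube b a)) ≤ 4 ^ n * ν (Sset x y) := by
  set U := ⋃ x ∈ {v | IsVertex b a v}, ⋃ y ∈ {v | IsVertex b a v}, Sset x y
  have hnull : ν (meets (cube b a) \ U) = 0 :=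
    measure_mono_null (meets_cube_diff_subset_iUnion_meets_vertex ha) <|
      (measure_biUnion_null_iff ((setOf_isVertex_eq_range_vert b a).symm ▸ countable_range _)).2
        fun p hp => hpt p (hQ (hp.mem_cube ha.le))
  refine ⟨hnull, ?_⟩
  obtain ⟨⟨s, t⟩, hst⟩ := exists_measure_iUnion_le_card_mul ν
    fun st : (Fin n → Bool) × (Fin n → Bool) => Sset (vert b a st.1) (vert b a st.2)
  have hle : ν (meets (cube b a)) ≤ 4 ^ n * ν (Sset (vert b a s) (vert b a t)) :=
    calc ν (meets (cube b a)) ≤ ν (meets (cube b a) \ U ∪ U) :=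
          measure_mono (subset_sdiff_union _ _)
      _ ≤ ν U := (measure_union_le _ _).trans_eq (by rw [hnull, zero_add])
      _ ≤ _ := by
        simpa [U, setOf_isVertex_eq_range_vert, biUnion_range, iUnion_prod', Fintype.card_fun,
          ← mul_pow] using hst
  by_cases h0 : ν (Sset (vert b a s) (vert b a t)) = 0
  · refine ⟨_, _, vert_isVertex b a (fun _ => false), vert_isVertex b a (fun _ => true),
      (vert_injective ha.ne').ne fun h => by simpa using congrFun h ⟨0, by omega⟩, ?_⟩
    exact hle.trans (by simp [h0])
  · exact ⟨_, _, vert_isVertex b a s, vert_isVertex b a t,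
      ne_of_mem_Sset (nonempty_of_measure_ne_zero h0).some_mem, hle⟩

/-- up to a `ν`-null set, `π Q` is covered by the sets `S_{x,y}` over pairs of
vertices of the cube `Q`; consequently some pair of distinct vertices `x, y` satisfies
`ν(S_{x,y}) ≥ 4⁻ⁿ ν(π Q)`. -/
theorem stmt15 (n : ℕ) (hn : 2 ≤ n) (Ω : Set (Euc n)) (hΩo : IsOpen Ω) (hΩne : Ω.Nonempty)
    (hΩc : Convex ℝ Ω) (ν : Measure (Hyp n))
    (hpt : ∀ p ∈ Ω, ν (meets {p}) = 0)
    (b : Euc n) (a : ℝ) (ha : 0 < a) (hQ : cube b a ⊆ Ω) :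
    ν (meets (cube b a) \
        ⋃ x ∈ {v | IsVertex b a v}, ⋃ y ∈ {v | IsVertex b a v}, Sset x y) = 0 ∧
    ∃ x y, IsVertex b a x ∧ IsVertex b a y ∧ x ≠ y ∧
      ν (meets (cube b a)) ≤ 4 ^ n * ν (Sset x y) :=
  stmt15_general n hn Ω ν hpt b a ha hQ
end
end

section
/- Let μ be a nonatomic Radon measure on ℝⁿ whose support is not contained in any line and which satisfies 0 < ∫ |x|^{-1} dμ(x) < ∞. Let ν = Φ_*(μ × ω), where ω is the normalized volume measure on S^{n−1} and Φ(a,v) = {x : ⟨x,v⟩ = ⟨a,v⟩}. Then ν satisfies: ν(π{p}) = 0 for every point p, ν(πS) > 0 for every nondegenerate segment S, and ν(πK) < ∞ for every compact set K. -/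
open MeasureTheory Set

noncomputable section

/-- The normalized volume measure on the unit sphere `S^{n-1}`. -/
def sphOmega (n : ℕ) : Measure (Metric.sphere (0 : Euc n) 1) :=
  (((volume : Measure (Euc n)).toSphere) Set.univ)⁻¹ • ((volume : Measure (Euc n)).toSphere)

/-- `Φ(a, v)` is the hyperplane through `a` with unit normal `v`. -/
def PhiMap {n : ℕ} (p : Euc n × Metric.sphere (0 : Euc n) 1) : Hyp n :=
  ⟨((p.2 : Euc n), (inner ℝ p.1 (p.2 : Euc n) : ℝ)),
    mem_sphere_zero_iff_norm.mp p.2.2⟩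

/-- The pushforward measure `ν = Φ_*(μ × ω)` on the space of hyperplanes. -/
def nuPush {n : ℕ} (μ : Measure (Euc n)) : Measure (Hyp n) :=
  Measure.map PhiMap (μ.prod (sphOmega n))

/-!
ν(πA) = ∫ ω{v : Φ(a, v) meets A} dμ(a). If A lies in the ball B(c, r) and a ≠ c, every such v
lies in the band |⟪(a - c)/‖a - c‖, v⟫| ≤ r/‖a - c‖, whose ω-measure is O(r/‖a - c‖), since the
cone over a band of width ε fits in a box of volume O(ε). With r = 0 the slices of π{p} are null
for a ≠ p, and μ{p} = 0; with c = 0 the bound gives ν(πK) ≤ ω(S) μ{0} + C R ∫ ‖a‖⁻¹ dμ.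
For a segment [x, y] and a off its line, the lune {v : ⟪x - a, v⟫ > 0 > ⟪y - a, v⟫} is open and
nonempty, and Φ(a, v) crosses [x, y] for each of its v; the points off the line carry positive
μ-measure.
-/

open Metric
open scoped RealInnerProductSpace ENNReal

section InnerProductGeometry

variable {F : Type*} [NormedAddCommGroup F] [InnerProductSpace ℝ F]

theorem exists_mem_segment_inner_eq {x y v : F} {c : ℝ} (hy : ⟪y, v⟫ ≤ c) (hx : c ≤ ⟪x, v⟫) :
    ∃ z ∈ segment ℝ x y, ⟪z, v⟫ = c :=
  (convex_segment x y).isPreconnected.intermediate_value (right_mem_segment ℝ x y)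
    (left_mem_segment ℝ x y) (continuous_id.inner continuous_const).continuousOn ⟨hy, hx⟩

theorem exists_inner_pos_inner_neg {p q : F} (hpq : |⟪p, q⟫| < ‖p‖ * ‖q‖) :
    ∃ w : F, 0 < ⟪p, w⟫ ∧ ⟪q, w⟫ < 0 := by
  have hgram : 0 < ‖p‖ ^ 2 * ‖q‖ ^ 2 - ⟪p, q⟫ ^ 2 := by
    rw [← mul_pow, ← sq_abs ⟪p, q⟫, sub_pos]
    exact pow_lt_pow_left₀ hpq (abs_nonneg _) two_ne_zero
  -- `⟪p, w⟫ = -⟪q, w⟫` is the Gram determinant of `p` and `q`.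
  refine ⟨(‖q‖ ^ 2 + ⟪p, q⟫) • p - (‖p‖ ^ 2 + ⟪p, q⟫) • q, ?_, ?_⟩ <;>
  · simp only [inner_sub_right, real_inner_smul_right, real_inner_self_eq_norm_sq,
      real_inner_comm p q]
    nlinarith

theorem abs_inner_sub_lt_of_notMem_line {x y a : F} (hxy : x ≠ y)
    (ha : ¬∃ t : ℝ, a = x + t • (y - x)) :
    |⟪x - a, y - a⟫| < ‖x - a‖ * ‖y - a‖ := by
  have hxa : x - a ≠ 0 := fun h => ha ⟨0, by rw [zero_smul, add_zero, (sub_eq_zero.mp h)]⟩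
  have hya : y - a ≠ 0 := fun h => ha ⟨1, by rw [one_smul, add_sub_cancel, (sub_eq_zero.mp h)]⟩
  refine (abs_real_inner_le_norm _ _).lt_of_ne fun heq => ?_
  obtain ⟨r, -, hr⟩ := (norm_inner_eq_norm_iff (𝕜 := ℝ) hxa hya).mp heq
  have hr1 : 1 - r ≠ 0 := by
    rintro h
    rw [← sub_eq_zero.mp h, one_smul] at hr
    exact hxy (sub_left_injective hr).symm
  refine ha ⟨(1 - r)⁻¹, ?_⟩
  have hyx : y - x = (r - 1) • (x - a) := by
    rw [sub_smul, one_smul, ← hr]; abel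
  rw [hyx, smul_smul, show (1 - r)⁻¹ * (r - 1) = -1 by field_simp; ring, neg_one_smul]
  abel

end InnerProductGeometry

theorem EuclideanSpace.volume_coord_slab_le {ι : Type*} [Fintype ι] [DecidableEq ι] (i : ι)
    (ε : ℝ) :
    volume {y : EuclideanSpace ℝ ι | ‖y‖ ≤ 1 ∧ |y i| ≤ ε} ≤
      ENNReal.ofReal (2 * ε) * 2 ^ (Fintype.card ι - 1) := by
  set c : ι → ℝ := Function.update 1 i ε
  have hbox : {y : EuclideanSpace ℝ ι | ‖y‖ ≤ 1 ∧ |y i| ≤ ε} ⊆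
      WithLp.ofLp ⁻¹' univ.pi fun j => Icc (-c j) (c j) := by
    rintro y ⟨hy, hyi⟩ j -
    rw [mem_Icc, ← abs_le]
    rcases eq_or_ne j i with rfl | hj
    · simpa [c] using hyi
    · simpa [c, hj] using (PiLp.norm_apply_le y j).trans hy
  calc _ ≤ volume (WithLp.ofLp ⁻¹' univ.pi fun j => Icc (-c j) (c j)) := measure_mono hbox
    _ = ∏ j, ENNReal.ofReal (2 * c j) := by
      rw [(PiLp.volume_preserving_ofLp ι).measure_preimage
        (MeasurableSet.univ_pi fun _ => measurableSet_Icc).nullMeasurableSet, volume_pi_pi]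
      simp only [Real.volume_Icc, sub_neg_eq_add, two_mul]
    _ = _ := by
      rw [show (fun j => ENNReal.ofReal (2 * c j)) =
          Function.update (fun _ => 2) i (ENNReal.ofReal (2 * ε)) by
        ext j; rcases eq_or_ne j i with rfl | hj <;> simp [c, *]]
      rw [Finset.prod_update_of_mem (Finset.mem_univ i), Finset.prod_const,
        Finset.card_sdiff, Finset.card_univ]
      simp

theorem volume_slab_le {F : Type*} [NormedAddCommGroup F] [InnerProductSpace ℝ F]
    [FiniteDimensional ℝ F] [MeasurableSpace F] [BorelSpace F] {u : F} (hu : ‖u‖ = 1) (ε : ℝ) :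
    volume {x : F | ‖x‖ ≤ 1 ∧ |⟪u, x⟫| ≤ ε} ≤
      ENNReal.ofReal (2 * ε) * 2 ^ (Module.finrank ℝ F - 1) := by
  classical
  have hu' : Orthonormal ℝ ((↑) : ({u} : Set F) → F) := by
    rw [orthonormal_subtype_iff_ite]
    simp [hu]
  obtain ⟨s, b, hus, hb⟩ := hu'.exists_orthonormalBasis_extension
  set i : s := ⟨u, hus rfl⟩
  have hrepr : ∀ x, b.repr x i = ⟪u, x⟫ := fun x => by
    rw [b.repr_apply_apply, hb]
  have hpre : {x : F | ‖x‖ ≤ 1 ∧ |⟪u, x⟫| ≤ ε} =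
      b.repr ⁻¹' {y | ‖y‖ ≤ 1 ∧ |y i| ≤ ε} := by
    ext x; simp [hrepr]
  have hclosed : IsClosed {y : EuclideanSpace ℝ s | ‖y‖ ≤ 1 ∧ |y i| ≤ ε} :=
    (isClosed_le continuous_norm continuous_const).inter
      (isClosed_le (by fun_prop : Continuous fun y : EuclideanSpace ℝ s => |y i|) continuous_const)
  rw [hpre, b.measurePreserving_repr.measure_preimage hclosed.nullMeasurableSet,
    Module.finrank_eq_card_basis b.toBasis]
  exact EuclideanSpace.volume_coord_slab_le i ε

theorem MeasureTheory.Measure.toSphere_band_le {F : Type*} [NormedAddCommGroup F]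
    [InnerProductSpace ℝ F] [MeasurableSpace F] [BorelSpace F] (μ : Measure F) (u : F) (ε : ℝ) :
    μ.toSphere {v | |⟪u, (v : F)⟫| ≤ ε} ≤
      Module.finrank ℝ F * μ {x | ‖x‖ ≤ 1 ∧ |⟪u, x⟫| ≤ ε} := by
  have hclosed : IsClosed {v : sphere (0 : F) 1 | |⟪u, (v : F)⟫| ≤ ε} :=
    isClosed_le (by fun_prop) continuous_const
  rw [μ.toSphere_apply' hclosed.measurableSet]
  gcongr
  rintro _ ⟨r, ⟨hr0, hr1⟩, _, ⟨v, hv, rfl⟩, rfl⟩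
  have hv1 : ‖(v : F)‖ = 1 := mem_sphere_zero_iff_norm.mp v.2
  refine ⟨by simp [norm_smul, hv1, abs_of_pos hr0, hr1.le], ?_⟩
  rw [real_inner_smul_right, abs_mul, abs_of_pos hr0]
  exact (mul_le_of_le_one_left (abs_nonneg _) hr1.le).trans hv

theorem sphOmega_apply {n : ℕ} (s : Set (sphere (0 : Euc n) 1)) :
    sphOmega n s = ((volume : Measure (Euc n)).toSphere univ)⁻¹ *
      (volume : Measure (Euc n)).toSphere s := rfl

instance {n : ℕ} : IsFiniteMeasure (sphOmega n) :=
  ⟨((sphOmega_apply _).trans_le (ENNReal.inv_mul_le_one _)).trans_lt ENNReal.one_lt_top⟩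

instance {n : ℕ} : (sphOmega n).IsOpenPosMeasure :=
  Measure.isOpenPosMeasure_smul _ (ENNReal.inv_ne_zero.mpr (measure_ne_top _ _))

theorem exists_sphOmega_band_le (n : ℕ) : ∃ C < ⊤, ∀ u : Euc n, ‖u‖ = 1 → ∀ ε : ℝ,
    sphOmega n {v | |⟪u, (v : Euc n)⟫| ≤ ε} ≤ C * ENNReal.ofReal ε := by
  rcases subsingleton_or_nontrivial (Euc n) with hE | _
  · exact ⟨0, ENNReal.zero_lt_top, fun u hu => by simp [Subsingleton.elim u 0] at hu⟩
  have hn : n ≠ 0 := by simpa using (Module.finrank_pos (R := ℝ) (M := Euc n)).ne'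
  set T := (volume : Measure (Euc n)).toSphere univ
  have hT : T ≠ 0 := by simp [T, hn, (measure_ball_pos volume (0 : Euc n) one_pos).ne']
  refine ⟨T⁻¹ * (n * (2 * 2 ^ (n - 1))), ?_, fun u hu ε => ?_⟩
  · exact ENNReal.mul_lt_top (ENNReal.inv_lt_top.mpr (pos_iff_ne_zero.mpr hT))
      (by simp [ENNReal.mul_lt_top])
  calc sphOmega n {v | |⟪u, (v : Euc n)⟫| ≤ ε}
      ≤ T⁻¹ * (n * (ENNReal.ofReal (2 * ε) * 2 ^ (n - 1))) := by
        rw [sphOmega_apply]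
        grw [Measure.toSphere_band_le, volume_slab_le hu, finrank_euclideanSpace_fin]
    _ = _ := by
        rw [ENNReal.ofReal_mul zero_le_two, ENNReal.ofReal_ofNat]
        ring

section Hyperplanes

variable {n : ℕ}

theorem continuous_PhiMap : Continuous (PhiMap (n := n)) :=
  ((continuous_subtype_val.comp continuous_snd).prodMk
    (continuous_fst.inner (continuous_subtype_val.comp continuous_snd))).subtype_mk _

theorem PhiMap_mem_meets_iff {A : Set (Euc n)} {a : Euc n} {v : sphere (0 : Euc n) 1} :
    PhiMap (a, v) ∈ meets A ↔ ∃ z ∈ A, ⟪z, (v : Euc n)⟫ = ⟪a, (v : Euc n)⟫ :=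
  ⟨fun ⟨z, hz, hzA⟩ => ⟨z, hzA, hz⟩, fun ⟨z, hzA, hz⟩ => ⟨z, hz, hzA⟩⟩

theorem IsCompact.isClosed_meets {K : Set (Euc n)} (hK : IsCompact K) : IsClosed (meets K) := by
  have : CompactSpace K := isCompact_iff_compactSpace.mp hK
  have hmeets : meets K = Prod.snd '' {p : K × Hyp n | ⟪(p.1 : Euc n), p.2.1.1⟫ = p.2.1.2} := by
    ext H
    exact ⟨fun ⟨z, hz, hzK⟩ => ⟨(⟨z, hzK⟩, H), hz, rfl⟩,
      fun ⟨(z, H'), hz, hH⟩ => hH ▸ ⟨z, hz, z.2⟩⟩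
  rw [hmeets]
  exact isClosedMap_snd_of_compactSpace _ (isClosed_eq (by fun_prop) (by fun_prop))

theorem nuPush_apply (μ : Measure (Euc n)) {s : Set (Hyp n)} (hs : MeasurableSet s) :
    nuPush μ s = ∫⁻ a, sphOmega n {v | PhiMap (a, v) ∈ s} ∂μ := by
  rw [nuPush, Measure.map_apply continuous_PhiMap.measurable hs,
    Measure.prod_apply (continuous_PhiMap.measurable hs)]
  rfl

theorem exists_sphOmega_meets_le : ∃ C < ⊤, ∀ (K : Set (Euc n)) (c : Euc n) (r : ℝ),
    K ⊆ closedBall c r → ∀ a ≠ c,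
      sphOmega n {v | PhiMap (a, v) ∈ meets K} ≤ C * ENNReal.ofReal (r / ‖a - c‖) := by
  obtain ⟨C, hC, hband⟩ := exists_sphOmega_band_le n
  refine ⟨C, hC, fun K c r hK a hac => ?_⟩
  have hd : ‖a - c‖ ≠ 0 := norm_ne_zero_iff.mpr (sub_ne_zero.mpr hac)
  refine (measure_mono fun v hv => ?_).trans
    (hband (‖a - c‖⁻¹ • (a - c)) (by rw [norm_smul, norm_inv, norm_norm, inv_mul_cancel₀ hd]) _)
  obtain ⟨z, hzK, hz⟩ := PhiMap_mem_meets_iff.mp hv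
  have hv1 : ‖(v : Euc n)‖ = 1 := mem_sphere_zero_iff_norm.mp v.2
  have hac' : |⟪a - c, (v : Euc n)⟫| ≤ r := by
    rw [inner_sub_left, ← hz, ← inner_sub_left]
    exact (abs_real_inner_le_norm _ _).trans (by simpa [hv1, ← dist_eq_norm] using hK hzK)
  change |⟪‖a - c‖⁻¹ • (a - c), (v : Euc n)⟫| ≤ r / ‖a - c‖
  rw [real_inner_smul_left, abs_mul, abs_inv, abs_norm, inv_mul_eq_div]
  exact div_le_div_of_nonneg_right hac' (norm_nonneg _)

theorem sphOmega_pos_of_inner_pos_inner_neg {p q w : Euc n} (hp : 0 < ⟪p, w⟫) (hq : ⟪q, w⟫ < 0) :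
    0 < sphOmega n {v | 0 < ⟪p, (v : Euc n)⟫ ∧ ⟪q, (v : Euc n)⟫ < 0} := by
  have hw : ‖w‖ ≠ 0 := norm_ne_zero_iff.mpr (by rintro rfl; simp at hp)
  have hopen : IsOpen {v : sphere (0 : Euc n) 1 | 0 < ⟪p, (v : Euc n)⟫ ∧ ⟪q, (v : Euc n)⟫ < 0} :=
    (isOpen_lt continuous_const (by fun_prop)).and (isOpen_lt (by fun_prop) continuous_const)
  refine hopen.measure_pos _ ⟨⟨‖w‖⁻¹ • w, by simp [norm_smul, hw]⟩, ?_, ?_⟩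
  · simpa [real_inner_smul_right] using mul_pos (inv_pos.mpr ((norm_nonneg w).lt_of_ne' hw)) hp
  · simpa [real_inner_smul_right] using
      mul_neg_of_pos_of_neg (inv_pos.mpr ((norm_nonneg w).lt_of_ne' hw)) hq

theorem nuPush_meets_singleton {μ : Measure (Euc n)} {p : Euc n} (hp : μ {p} = 0) :
    nuPush μ (meets {p}) = 0 := by
  obtain ⟨C, -, hC⟩ := exists_sphOmega_meets_le (n := n)
  have hzero : ∀ a ∈ ({p} : Set (Euc n))ᶜ, sphOmega n {v | PhiMap (a, v) ∈ meets {p}} = 0 :=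
    fun a ha => nonpos_iff_eq_zero.mp <| by
      simpa using hC {p} p 0 (singleton_subset_iff.mpr (mem_closedBall_self le_rfl)) a ha
  rw [nuPush_apply μ isCompact_singleton.isClosed_meets.measurableSet,
    lintegral_congr_ae (Filter.eventually_of_mem (compl_mem_ae_iff.mpr hp) hzero), lintegral_zero]

theorem nuPush_meets_segment_pos {μ : Measure (Euc n)} {x y : Euc n} (hxy : x ≠ y)
    (hline : 0 < μ {a | ∃ t : ℝ, a = x + t • (y - x)}ᶜ) :
    0 < nuPush μ (meets (segment ℝ x y)) := by
  have hseg : IsCompact (segment ℝ x y) := by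
    rw [← convexHull_pair (𝕜 := ℝ)]
    exact (toFinite _).isCompact_convexHull ℝ
  have hs := hseg.isClosed_meets.measurableSet
  have hmeas : Measurable fun a => sphOmega n {v | PhiMap (a, v) ∈ meets (segment ℝ x y)} :=
    measurable_measure_prodMk_left (continuous_PhiMap.measurable hs)
  rw [nuPush_apply μ hs, lintegral_pos_iff_support hmeas]
  refine hline.trans_le (measure_mono fun a ha => ?_)
  obtain ⟨w, hxw, hyw⟩ := exists_inner_pos_inner_neg (abs_inner_sub_lt_of_notMem_line hxy ha)
  refine ((sphOmega_pos_of_inner_pos_inner_neg hxw hyw).trans_le (measure_mono ?_)).ne'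
  rintro v ⟨hxv, hyv⟩
  rw [inner_sub_left, sub_pos] at hxv
  rw [inner_sub_left, sub_neg] at hyv
  exact PhiMap_mem_meets_iff.mpr (exists_mem_segment_inner_eq hyv.le hxv.le)

theorem nuPush_meets_lt_top {μ : Measure (Euc n)} [IsFiniteMeasureOnCompacts μ]
    (hfin : ∫⁻ x, ENNReal.ofReal ‖x‖⁻¹ ∂μ < ⊤) {K : Set (Euc n)} (hK : IsCompact K) :
    nuPush μ (meets K) < ⊤ := by
  obtain ⟨R, hR⟩ := hK.isBounded.subset_closedBall 0
  obtain ⟨C, hC, hCK⟩ := exists_sphOmega_meets_le (n := n)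
  -- `‖0‖⁻¹ = 0`, so the origin needs the indicator term
  have hbound : ∀ a, sphOmega n {v | PhiMap (a, v) ∈ meets K} ≤
      ({0} : Set (Euc n)).indicator (fun _ => sphOmega n univ) a +
        C * ENNReal.ofReal R * ENNReal.ofReal ‖a‖⁻¹ := by
    intro a
    rcases eq_or_ne a 0 with rfl | ha
    · simpa using measure_mono (subset_univ _)
    · calc _ ≤ C * ENNReal.ofReal (R / ‖a - 0‖) := hCK K 0 R hR a ha
        _ ≤ _ := by
          rw [sub_zero, div_eq_mul_inv, ENNReal.ofReal_mul' (inv_nonneg.mpr (norm_nonneg a)),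
            ← mul_assoc]
          exact le_add_self
  rw [nuPush_apply μ hK.isClosed_meets.measurableSet]
  calc _ ≤ _ := lintegral_mono hbound
    _ = sphOmega n univ * μ {0} + C * ENNReal.ofReal R * ∫⁻ a, ENNReal.ofReal ‖a‖⁻¹ ∂μ := by
      rw [lintegral_add_left (measurable_const.indicator (measurableSet_singleton 0)),
        lintegral_indicator_const (measurableSet_singleton 0),
        lintegral_const_mul _ (by fun_prop)]
    _ < ⊤ := by
      have := isCompact_singleton (x := (0 : Euc n)).measure_lt_top (μ := μ)
      finiteness

end Hyperplanes

theorem stmt16_general (n : ℕ) (μ : Measure (Euc n)) [IsFiniteMeasureOnCompacts μ]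
    (hatom : ∀ x : Euc n, μ {x} = 0)
    (hline : ∀ p v : Euc n, v ≠ 0 → 0 < μ ({x | ∃ t : ℝ, x = p + t • v}ᶜ))
    (hfin : ∫⁻ x, ENNReal.ofReal ‖x‖⁻¹ ∂μ < ⊤) :
    (∀ p : Euc n, nuPush μ (meets {p}) = 0) ∧
    (∀ x y : Euc n, x ≠ y → 0 < nuPush μ (meets (segment ℝ x y))) ∧
    (∀ K : Set (Euc n), IsCompact K → nuPush μ (meets K) < ⊤) :=
  ⟨fun p => nuPush_meets_singleton (hatom p),
    fun x y hxy => nuPush_meets_segment_pos hxy (hline x (y - x) (sub_ne_zero.mpr hxy.symm)),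
    fun _ hK => nuPush_meets_lt_top hfin hK⟩

/-- if `μ` is a nonatomic Radon measure whose support is not contained in any
line and `0 < ∫ |x|⁻¹ dμ < ∞`, then `ν = Φ_*(μ × ω)` satisfies the standing assumptions:
null on hyperplanes through a point, positive on hyperplanes meeting a nondegenerate
segment, finite on hyperplanes meeting a compact set. -/
theorem stmt16 (n : ℕ) (hn : 2 ≤ n) (μ : Measure (Euc n)) [IsFiniteMeasureOnCompacts μ]
    (hatom : ∀ x : Euc n, μ {x} = 0)
    (hline : ∀ p v : Euc n, v ≠ 0 → 0 < μ ({x | ∃ t : ℝ, x = p + t • v}ᶜ))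
    (hpos : 0 < ∫⁻ x, ENNReal.ofReal ‖x‖⁻¹ ∂μ)
    (hfin : ∫⁻ x, ENNReal.ofReal ‖x‖⁻¹ ∂μ < ⊤) :
    (∀ p : Euc n, nuPush μ (meets {p}) = 0) ∧
    (∀ x y : Euc n, x ≠ y → 0 < nuPush μ (meets (segment ℝ x y))) ∧
    (∀ K : Set (Euc n), IsCompact K → nuPush μ (meets K) < ⊤) :=
  stmt16_general n μ hatom hline hfin
end
end
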